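/- arXiv:1404.4032 — 2 statements merged into one kernel-verified Lean document; each statement's English description precedes it below -/
import Mathlib

section
/- Let X = L₀ + S₀ with S₀ supported on Ω, and let A satisfy P_{U_A}(U₀) = U₀ (the column space of L₀ is contained in that of A) and U_A ∩ Ω = {0} (no nonzero matrix in the range of P_{U_A} is supported on Ω). Let UΣVᵀ be the skinny SVD of A⁺L₀. If there exists a matrix F with (a) UVᵀ = λAᵀ(sign(S₀)+F), (b) P_Ω(F) = 0, and (c) ‖P_{Ω^⊥}(F)‖_∞ < 1, then (Z,S) = (A⁺L₀, S₀) is the unique optimal solution of the convex program min_{Z,S} ‖Z‖_* + λ‖S‖_1 subject to X = AZ + S. -/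
/-!
Write `Z₀ = A⁺L₀`; since `A Z₀ = L₀`, every feasible pair is `(Z₀ + H, S₀ - AH)`. All
nuclear-norm estimates come from the duality `tr(YᵀM) ≤ ‖M‖_*` for contractions `YᵀY ≤ 1`, with
equality at the partial isometry `P_M` of the polar decomposition of `M`. As `UVᵀ` is a
contraction, `‖Z₀ + H‖_* ≥ ‖Z₀‖_* + λ⟨sign S₀ + F, AH⟩`, while entrywise
`|S₀ - AH| ≥ |S₀| - (sign S₀ + F) AH`, strictly wherever `AH ≠ 0` off `Ω` because `|F| < 1`
there. Adding the two settles the case where `AH` does not vanish off `Ω`. Otherwise `AH` lies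
in the range of `P_{U_A}` and is supported on `Ω`, so `AH = 0`: then `S = S₀`, `H ≠ 0` and
`Z₀ᵀH = 0`. For such `H`, `P_{Z₀}` and `P_H` have orthogonal ranges, so `a P_{Z₀} + b P_H` with
`a² + b² = 1` is again a contraction; it pairs with `Z₀ + H` to `a‖Z₀‖_* + b‖H‖_*`, which
exceeds `‖Z₀‖_*` for a suitable choice of `(a, b)` because `‖H‖_* > 0`.
-/

open Matrix

/-- The nuclear norm of a real matrix: the sum of its singular values. -/
noncomputable def nucNorm {m n : ℕ} (M : Matrix (Fin m) (Fin n) ℝ) : ℝ :=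
  ∑ j, Real.sqrt ((show (Mᵀ * M).IsHermitian by
    simpa using Matrix.isHermitian_conjTranspose_mul_self M).eigenvalues j)

/-- The entrywise ℓ1 norm of a real matrix. -/
noncomputable def l1Norm {m n : ℕ} (M : Matrix (Fin m) (Fin n) ℝ) : ℝ :=
  ∑ i, ∑ j, |M i j|

open scoped MatrixOrder

section Gram

lemma isHermitian_transpose_mul_self {ι κ : Type*} [Fintype ι] (M : Matrix ι κ ℝ) :
    (Mᵀ * M).IsHermitian := by
  simpa using isHermitian_conjTranspose_mul_self M

variable {ι κ : Type*} [Fintype ι] [Fintype κ] [DecidableEq κ] (M : Matrix ι κ ℝ)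

noncomputable def gramEigenvectors : Matrix κ κ ℝ :=
  (isHermitian_transpose_mul_self M).eigenvectorUnitary

noncomputable def gramEigenvalues : κ → ℝ :=
  (isHermitian_transpose_mul_self M).eigenvalues

lemma gramEigenvalues_nonneg (j : κ) : 0 ≤ gramEigenvalues M j :=
  (show (Mᵀ * M).PosSemidef by
    simpa using posSemidef_conjTranspose_mul_self M).eigenvalues_nonneg j

lemma gramEigenvectors_transpose_mul_self :
    (gramEigenvectors M)ᵀ * gramEigenvectors M = 1 := by
  rw [← conjTranspose_eq_transpose_of_trivial]
  exact ((isHermitian_transpose_mul_self M).eigenvectorUnitary).2.1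

lemma gramEigenvectors_mul_transpose_self :
    gramEigenvectors M * (gramEigenvectors M)ᵀ = 1 := by
  rw [← conjTranspose_eq_transpose_of_trivial]
  exact ((isHermitian_transpose_mul_self M).eigenvectorUnitary).2.2

lemma gram_spectral_theorem :
    Mᵀ * M = gramEigenvectors M * diagonal (gramEigenvalues M) * (gramEigenvectors M)ᵀ := by
  have h := (isHermitian_transpose_mul_self M).spectral_theorem
  rw [Unitary.conjStarAlgAut_apply] at h
  simpa [gramEigenvectors, gramEigenvalues, star_eq_conjTranspose,
    ← conjTranspose_eq_transpose_of_trivial] using h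

lemma mul_gramEigenvectors_transpose_mul_self :
    (M * gramEigenvectors M)ᵀ * (M * gramEigenvectors M) = diagonal (gramEigenvalues M) := by
  rw [transpose_mul, Matrix.mul_assoc, ← Matrix.mul_assoc Mᵀ, gram_spectral_theorem]
  simp only [Matrix.mul_assoc]
  rw [gramEigenvectors_transpose_mul_self, Matrix.mul_one, ← Matrix.mul_assoc,
    gramEigenvectors_transpose_mul_self, Matrix.one_mul]

end Gram

lemma nucNorm_eq_sum_sqrt {m n : ℕ} (M : Matrix (Fin m) (Fin n) ℝ) :
    nucNorm M = ∑ j, √(gramEigenvalues M j) := rfl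

section Contraction

variable {ι ι' κ : Type*}

lemma apply_self_le_of_le {A B : Matrix ι ι ℝ} (h : A ≤ B) (k : ι) : A k k ≤ B k k :=
  sub_nonneg.1 (Matrix.le_iff.1 h).diag_nonneg

variable [Fintype ι]

lemma transpose_mul_apply_self_le_sqrt_mul_sqrt (P R : Matrix ι κ ℝ) (k : κ) :
    (Pᵀ * R) k k ≤ √((Pᵀ * P) k k) * √((Rᵀ * R) k k) := by
  simp only [mul_apply, transpose_apply, ← sq]
  exact Real.sum_mul_le_sqrt_mul_sqrt _ _ _

variable [Fintype ι'] [DecidableEq ι'] [Fintype κ]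

lemma mul_transpose_mul_mul_le {Y : Matrix ι ι' ℝ} (hY : Yᵀ * Y ≤ 1) (R : Matrix ι' κ ℝ) :
    (Y * R)ᵀ * (Y * R) ≤ Rᵀ * R := by
  rw [Matrix.le_iff]
  convert (Matrix.le_iff.1 hY).conjTranspose_mul_mul_same R using 1
  simp only [conjTranspose_eq_transpose_of_trivial, Matrix.mul_sub, Matrix.sub_mul,
    Matrix.mul_one, transpose_mul, Matrix.mul_assoc]

lemma mul_transpose_mul_mul_apply_le_one [DecidableEq κ] {Y : Matrix ι ι' ℝ}
    (hY : Yᵀ * Y ≤ 1) {R : Matrix ι' κ ℝ} (hR : Rᵀ * R = 1) (k : κ) :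
    ((Y * R)ᵀ * (Y * R)) k k ≤ 1 := by
  simpa [hR] using apply_self_le_of_le (mul_transpose_mul_mul_le hY R) k

lemma mul_transpose_self_le_one [DecidableEq κ] {V : Matrix ι' κ ℝ} (hV : Vᵀ * V = 1) :
    V * Vᵀ ≤ 1 := by
  have hidem : (1 - V * Vᵀ)ᵀ * (1 - V * Vᵀ) = 1 - V * Vᵀ := by
    have h : V * Vᵀ * (V * Vᵀ) = V * Vᵀ := by
      rw [Matrix.mul_assoc, ← Matrix.mul_assoc Vᵀ, hV, Matrix.one_mul]
    rw [transpose_sub, transpose_one, transpose_mul, transpose_transpose, Matrix.sub_mul,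
      Matrix.mul_sub, Matrix.mul_sub, h]
    simp only [Matrix.one_mul, Matrix.mul_one]
    abel
  rw [Matrix.le_iff, ← hidem, ← conjTranspose_eq_transpose_of_trivial]
  exact posSemidef_conjTranspose_mul_self _

end Contraction

theorem trace_transpose_mul_le_nucNorm {m n : ℕ} {Y : Matrix (Fin m) (Fin n) ℝ} (hY : Yᵀ * Y ≤ 1)
    (M : Matrix (Fin m) (Fin n) ℝ) : trace (Yᵀ * M) ≤ nucNorm M := by
  set Q := gramEigenvectors M
  have htrace : trace (Yᵀ * M) = ∑ j, ((Y * Q)ᵀ * (M * Q)) j j := by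
    calc trace (Yᵀ * M) = trace (Yᵀ * M * (Q * Qᵀ)) := by
          rw [gramEigenvectors_mul_transpose_self, Matrix.mul_one]
      _ = trace (Qᵀ * (Yᵀ * M * Q)) := by
          rw [← Matrix.mul_assoc, trace_mul_comm]
      _ = ∑ j, ((Y * Q)ᵀ * (M * Q)) j j := by
          simp only [trace, diag, transpose_mul, Matrix.mul_assoc]
  rw [htrace, nucNorm_eq_sum_sqrt]
  refine Finset.sum_le_sum fun j _ => ?_
  calc ((Y * Q)ᵀ * (M * Q)) j j
      ≤ √(((Y * Q)ᵀ * (Y * Q)) j j) * √(((M * Q)ᵀ * (M * Q)) j j) :=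
        transpose_mul_apply_self_le_sqrt_mul_sqrt _ _ j
    _ ≤ 1 * √(gramEigenvalues M j) := by
        rw [mul_gramEigenvectors_transpose_mul_self, diagonal_apply_eq]
        gcongr
        exact Real.sqrt_le_one.2
          (mul_transpose_mul_mul_apply_le_one hY (gramEigenvectors_transpose_mul_self M) j)
    _ = √(gramEigenvalues M j) := one_mul _

section NuclearNorm

variable {m n : ℕ}

/-- `M (MᵀM)^{-1/2}`, where `0⁻¹ = 0` makes the inverse square root the pseudo-inverse one. -/
noncomputable def polarFactor (M : Matrix (Fin m) (Fin n) ℝ) : Matrix (Fin m) (Fin n) ℝ :=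
  M * gramEigenvectors M * diagonal (fun j => (√(gramEigenvalues M j))⁻¹) *
    (gramEigenvectors M)ᵀ

lemma polarFactor_eq_mul (M : Matrix (Fin m) (Fin n) ℝ) :
    ∃ C : Matrix (Fin n) (Fin n) ℝ, polarFactor M = M * C :=
  ⟨gramEigenvectors M * diagonal (fun j => (√(gramEigenvalues M j))⁻¹) * (gramEigenvectors M)ᵀ,
    by simp only [polarFactor, Matrix.mul_assoc]⟩

lemma polarFactor_transpose_mul_self_le_one (M : Matrix (Fin m) (Fin n) ℝ) :
    (polarFactor M)ᵀ * polarFactor M ≤ 1 := by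
  obtain ⟨W, hW⟩ : ∃ W,
      W = M * gramEigenvectors M * diagonal (fun j => (√(gramEigenvalues M j))⁻¹) := ⟨_, rfl⟩
  have hWW : Wᵀ * W ≤ 1 := by
    have hWdiag : Wᵀ * W = diagonal (fun j =>
        (√(gramEigenvalues M j))⁻¹ * gramEigenvalues M j * (√(gramEigenvalues M j))⁻¹) := by
      rw [hW, transpose_mul, diagonal_transpose, Matrix.mul_assoc, ← Matrix.mul_assoc _ (M * _),
        mul_gramEigenvectors_transpose_mul_self, diagonal_mul_diagonal, diagonal_mul_diagonal]
      simp only [mul_assoc]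
    rw [hWdiag, Matrix.le_iff, ← diagonal_one, diagonal_sub, posSemidef_diagonal_iff]
    intro j
    rw [← div_eq_inv_mul, Real.div_sqrt, sub_nonneg]
    exact mul_inv_le_one
  have h := mul_transpose_mul_mul_le hWW (gramEigenvectors M)ᵀ
  rwa [transpose_transpose, gramEigenvectors_mul_transpose_self, hW] at h

lemma trace_polarFactor_transpose_mul (M : Matrix (Fin m) (Fin n) ℝ) :
    trace ((polarFactor M)ᵀ * M) = nucNorm M := by
  calc trace ((polarFactor M)ᵀ * M)
      = trace (diagonal (fun j => (√(gramEigenvalues M j))⁻¹) *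
          ((M * gramEigenvectors M)ᵀ * (M * gramEigenvectors M))) := by
        rw [polarFactor, transpose_mul, transpose_transpose, Matrix.mul_assoc, trace_mul_comm]
        simp only [transpose_mul, diagonal_transpose, Matrix.mul_assoc]
    _ = nucNorm M := by
        rw [mul_gramEigenvectors_transpose_mul_self, diagonal_mul_diagonal, trace_diagonal,
          nucNorm_eq_sum_sqrt]
        simp only [← div_eq_inv_mul, Real.div_sqrt]

lemma nucNorm_pos {M : Matrix (Fin m) (Fin n) ℝ} (hM : M ≠ 0) : 0 < nucNorm M := by
  refine (Finset.sum_nonneg fun j _ => Real.sqrt_nonneg _).lt_of_ne' fun h => hM ?_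
  rw [Finset.sum_eq_zero_iff_of_nonneg fun j _ => Real.sqrt_nonneg _] at h
  have hzero : gramEigenvalues M = 0 := funext fun j =>
    (Real.sqrt_eq_zero'.1 (h j (Finset.mem_univ j))).antisymm (gramEigenvalues_nonneg M j)
  rw [← conjTranspose_mul_self_eq_zero, conjTranspose_eq_transpose_of_trivial,
    ← (isHermitian_transpose_mul_self M).eigenvalues_eq_zero_iff]
  exact hzero

lemma exists_sq_add_sq_eq_one_lt (x : ℝ) {y : ℝ} (hy : 0 < y) :
    ∃ a b : ℝ, a ^ 2 + b ^ 2 = 1 ∧ x < a * x + b * y := by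
  have hs : |x| < √(x ^ 2 + y ^ 2) :=
    (Real.lt_sqrt (abs_nonneg x)).2 (by rw [sq_abs]; nlinarith)
  have hs0 : 0 < √(x ^ 2 + y ^ 2) := (abs_nonneg x).trans_lt hs
  refine ⟨x / √(x ^ 2 + y ^ 2), y / √(x ^ 2 + y ^ 2), ?_, ?_⟩
  · rw [div_pow, div_pow, ← add_div, Real.sq_sqrt (by positivity), div_self (by positivity)]
  · have : x / √(x ^ 2 + y ^ 2) * x + y / √(x ^ 2 + y ^ 2) * y = √(x ^ 2 + y ^ 2) := by
      rw [div_mul_eq_mul_div, div_mul_eq_mul_div, ← add_div, ← sq, ← sq,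
        div_eq_iff hs0.ne', ← sq, Real.sq_sqrt (by positivity)]
    rw [this]
    exact (le_abs_self x).trans_lt hs

lemma smul_add_smul_transpose_mul_self_le_one {P₁ P₂ : Matrix (Fin m) (Fin n) ℝ}
    (h₁ : P₁ᵀ * P₁ ≤ 1) (h₂ : P₂ᵀ * P₂ ≤ 1) (h₁₂ : P₁ᵀ * P₂ = 0) {a b : ℝ}
    (hab : a ^ 2 + b ^ 2 = 1) : (a • P₁ + b • P₂)ᵀ * (a • P₁ + b • P₂) ≤ 1 := by
  have h₂₁ : P₂ᵀ * P₁ = 0 := by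
    rw [← transpose_transpose P₁, ← transpose_mul, h₁₂, transpose_zero]
  have hexp : (a • P₁ + b • P₂)ᵀ * (a • P₁ + b • P₂) = a ^ 2 • (P₁ᵀ * P₁) + b ^ 2 • (P₂ᵀ * P₂) := by
    simp only [transpose_add, transpose_smul, Matrix.add_mul, Matrix.mul_add, Matrix.smul_mul,
      Matrix.mul_smul, h₁₂, h₂₁, smul_zero, add_zero, zero_add, smul_smul, sq]
  calc _ = a ^ 2 • (P₁ᵀ * P₁) + b ^ 2 • (P₂ᵀ * P₂) := hexp
    _ ≤ a ^ 2 • 1 + b ^ 2 • 1 := add_le_add (smul_le_smul_of_nonneg_left h₁ (sq_nonneg a))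
        (smul_le_smul_of_nonneg_left h₂ (sq_nonneg b))
    _ = 1 := by rw [← add_smul, hab, one_smul]

theorem nucNorm_lt_nucNorm_add {M H : Matrix (Fin m) (Fin n) ℝ} (hMH : Mᵀ * H = 0) (hH : H ≠ 0) :
    nucNorm M < nucNorm (M + H) := by
  obtain ⟨C₁, hC₁⟩ := polarFactor_eq_mul M
  obtain ⟨C₂, hC₂⟩ := polarFactor_eq_mul H
  have h₁H : (polarFactor M)ᵀ * H = 0 := by
    rw [hC₁, transpose_mul, Matrix.mul_assoc, hMH, Matrix.mul_zero]
  have h₂M : (polarFactor H)ᵀ * M = 0 := by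
    rw [hC₂, transpose_mul, Matrix.mul_assoc, ← transpose_transpose M, ← transpose_mul, hMH,
      transpose_zero, Matrix.mul_zero]
  have h₁₂ : (polarFactor M)ᵀ * polarFactor H = 0 := by
    rw [hC₂, ← Matrix.mul_assoc, h₁H, Matrix.zero_mul]
  obtain ⟨a, b, hab, hlt⟩ := exists_sq_add_sq_eq_one_lt (nucNorm M) (nucNorm_pos hH)
  have htrace : trace ((a • polarFactor M + b • polarFactor H)ᵀ * (M + H)) =
      a * nucNorm M + b * nucNorm H := by
    simp only [transpose_add, transpose_smul, Matrix.add_mul, Matrix.mul_add, Matrix.smul_mul,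
      trace_add, trace_smul, h₁H, h₂M, trace_polarFactor_transpose_mul, smul_zero,
      add_zero, zero_add, smul_eq_mul]
  refine hlt.trans_le (htrace ▸ trace_transpose_mul_le_nucNorm ?_ _)
  exact smul_add_smul_transpose_mul_self_le_one (polarFactor_transpose_mul_self_le_one M)
    (polarFactor_transpose_mul_self_le_one H) h₁₂ hab

variable {κ : Type*} [Fintype κ] [DecidableEq κ]
  {U : Matrix (Fin m) κ ℝ} {V : Matrix (Fin n) κ ℝ}

lemma trace_transpose_mul_mul_diagonal_mul_transpose (Y : Matrix (Fin m) (Fin n) ℝ) (σ : κ → ℝ) :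
    trace (Yᵀ * (U * diagonal σ * Vᵀ)) = ∑ k, ((Y * V)ᵀ * U) k k * σ k := by
  rw [← Matrix.mul_assoc, trace_mul_comm, ← Matrix.mul_assoc, ← Matrix.mul_assoc,
    ← transpose_mul]
  simp [trace, mul_diagonal]

lemma mul_transpose_transpose_mul_self_le_one (hU : Uᵀ * U = 1) (hV : Vᵀ * V = 1) :
    (U * Vᵀ)ᵀ * (U * Vᵀ) ≤ 1 := by
  rw [transpose_mul, transpose_transpose, Matrix.mul_assoc, ← Matrix.mul_assoc Uᵀ, hU,
    Matrix.one_mul]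
  exact mul_transpose_self_le_one hV

lemma trace_mul_transpose_transpose_mul_svd (hU : Uᵀ * U = 1) (hV : Vᵀ * V = 1) (σ : κ → ℝ) :
    trace ((U * Vᵀ)ᵀ * (U * diagonal σ * Vᵀ)) = ∑ k, σ k := by
  rw [trace_transpose_mul_mul_diagonal_mul_transpose, Matrix.mul_assoc, hV, Matrix.mul_one, hU]
  simp

lemma trace_transpose_mul_svd_le {Y : Matrix (Fin m) (Fin n) ℝ} (hY : Yᵀ * Y ≤ 1)
    (hU : Uᵀ * U = 1) (hV : Vᵀ * V = 1) {σ : κ → ℝ} (hσ : ∀ k, 0 ≤ σ k) :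
    trace (Yᵀ * (U * diagonal σ * Vᵀ)) ≤ ∑ k, σ k := by
  rw [trace_transpose_mul_mul_diagonal_mul_transpose]
  refine Finset.sum_le_sum fun k _ => mul_le_of_le_one_left (hσ k) ?_
  calc ((Y * V)ᵀ * U) k k ≤ √(((Y * V)ᵀ * (Y * V)) k k) * √((Uᵀ * U) k k) :=
        transpose_mul_apply_self_le_sqrt_mul_sqrt _ _ k
    _ ≤ 1 * 1 := by
        rw [hU, one_apply_eq, Real.sqrt_one]
        gcongr
        exact Real.sqrt_le_one.2 (mul_transpose_mul_mul_apply_le_one hY hV k)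
    _ = 1 := one_mul 1

theorem nucNorm_svd (hU : Uᵀ * U = 1) (hV : Vᵀ * V = 1) {σ : κ → ℝ} (hσ : ∀ k, 0 ≤ σ k) :
    nucNorm (U * diagonal σ * Vᵀ) = ∑ k, σ k := by
  refine le_antisymm ?_ ?_
  · rw [← trace_polarFactor_transpose_mul]
    exact trace_transpose_mul_svd_le (polarFactor_transpose_mul_self_le_one _) hU hV hσ
  · rw [← trace_mul_transpose_transpose_mul_svd hU hV σ]
    exact trace_transpose_mul_le_nucNorm (mul_transpose_transpose_mul_self_le_one hU hV) _

theorem nucNorm_svd_add_trace_le (hU : Uᵀ * U = 1) (hV : Vᵀ * V = 1) {σ : κ → ℝ}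
    (hσ : ∀ k, 0 ≤ σ k) (Z : Matrix (Fin m) (Fin n) ℝ) :
    nucNorm (U * diagonal σ * Vᵀ) + trace ((U * Vᵀ)ᵀ * (Z - U * diagonal σ * Vᵀ)) ≤
      nucNorm Z := by
  rw [Matrix.mul_sub, trace_sub, trace_mul_transpose_transpose_mul_svd hU hV, nucNorm_svd hU hV hσ,
    add_sub_cancel]
  exact trace_transpose_mul_le_nucNorm (mul_transpose_transpose_mul_self_le_one hU hV) Z

end NuclearNorm

lemma abs_sub_sign_mul_le (s x : ℝ) : |s| - Real.sign s * x ≤ |s - x| := by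
  rcases lt_trichotomy s 0 with hs | rfl | hs
  · rw [Real.sign_of_neg hs, abs_of_neg hs]
    linarith [neg_le_abs (s - x)]
  · simp
  · rw [Real.sign_of_pos hs, abs_of_pos hs]
    linarith [le_abs_self (s - x)]

lemma neg_mul_lt_abs {f x : ℝ} (hf : |f| < 1) (hx : x ≠ 0) : -(f * x) < |x| :=
  calc -(f * x) ≤ |f| * |x| := abs_mul f x ▸ neg_le_abs _
    _ < 1 * |x| := mul_lt_mul_of_pos_right hf (abs_pos.2 hx)
    _ = |x| := one_mul _

lemma trace_transpose_mul_eq_sum {ι κ : Type*} [Fintype ι] [Fintype κ] (G D : Matrix ι κ ℝ) :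
    trace (Gᵀ * D) = ∑ i, ∑ j, G i j * D i j := by
  simp only [trace, diag, mul_apply, transpose_apply]
  exact Finset.sum_comm

theorem l1Norm_sub_trace_lt {m n : ℕ} {S₀ F D : Matrix (Fin m) (Fin n) ℝ}
    {Ω : Set (Fin m × Fin n)} (hS₀ : ∀ p ∉ Ω, S₀ p.1 p.2 = 0) (hFΩ : ∀ p ∈ Ω, F p.1 p.2 = 0)
    (hF : ∀ p ∉ Ω, |F p.1 p.2| < 1) (hD : ∃ p ∉ Ω, D p.1 p.2 ≠ 0) :
    l1Norm S₀ - trace ((of (fun i j => Real.sign (S₀ i j)) + F)ᵀ * D) < l1Norm (S₀ - D) := by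
  set G := of (fun i j => Real.sign (S₀ i j)) + F
  have hle : ∀ p : Fin m × Fin n, |S₀ p.1 p.2| - G p.1 p.2 * D p.1 p.2 ≤ |(S₀ - D) p.1 p.2| := by
    intro p
    by_cases hp : p ∈ Ω
    · simpa [G, hFΩ p hp] using abs_sub_sign_mul_le (S₀ p.1 p.2) (D p.1 p.2)
    · rcases eq_or_ne (D p.1 p.2) 0 with hDp | hDp
      · simp [hDp]
      · simpa [G, hS₀ p hp] using (neg_mul_lt_abs (hF p hp) hDp).le
  obtain ⟨p₀, hp₀, hDp₀⟩ := hD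
  have hlt : |S₀ p₀.1 p₀.2| - G p₀.1 p₀.2 * D p₀.1 p₀.2 < |(S₀ - D) p₀.1 p₀.2| := by
    simpa [G, hS₀ p₀ hp₀] using neg_mul_lt_abs (hF p₀ hp₀) hDp₀
  rw [l1Norm, l1Norm, trace_transpose_mul_eq_sum, ← Finset.sum_sub_distrib]
  simp only [← Finset.sum_sub_distrib]
  rw [← Fintype.sum_prod_type', ← Fintype.sum_prod_type']
  exact Finset.sum_lt_sum (fun p _ => hle p) ⟨p₀, Finset.mem_univ _, hlt⟩

lemma exists_eq_mul_of_range_le {ι α β : Type*} [Fintype α] [DecidableEq α] [Fintype β]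
    [DecidableEq β] {P : Matrix ι α ℝ} {R : Matrix ι β ℝ}
    (h : LinearMap.range (toLin' R) ≤ LinearMap.range (toLin' P)) :
    ∃ C : Matrix α β ℝ, R = P * C := by
  have hcol (j : β) : ∃ v, P *ᵥ v = R *ᵥ Pi.single j 1 :=
    h ⟨Pi.single j 1, toLin'_apply R _⟩
  choose v hv using hcol
  refine ⟨of fun k j => v j k, ext fun i j => ?_⟩
  have h1 := congrFun (hv j) i
  rw [mulVec_single_one] at h1
  rw [mul_apply, ← col_apply R j i, ← h1]
  simp [mulVec, dotProduct]

lemma pinv_transpose_mul_eq_zero {ι κ ν : Type*} [Fintype ι] [Fintype κ]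
    {A : Matrix ι κ ℝ} {Apinv : Matrix κ ι ℝ} (hp2 : Apinv * A * Apinv = Apinv)
    (hp4 : (Apinv * A)ᵀ = Apinv * A) {H : Matrix κ ν ℝ} (hAH : A * H = 0) :
    Apinvᵀ * H = 0 := by
  rw [← hp2, transpose_mul, hp4, Matrix.mul_assoc, Matrix.mul_assoc, hAH, Matrix.mul_zero,
    Matrix.mul_zero]

theorem lrr_dual_conditions_general (m n d r_A r : ℕ) (lam : ℝ) (hlam : 0 < lam)
    (X L₀ S₀ : Matrix (Fin m) (Fin n) ℝ) (A : Matrix (Fin m) (Fin d) ℝ)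
    (Ω : Set (Fin m × Fin n))
    (hX : X = L₀ + S₀)
    (hS₀supp : ∀ p : Fin m × Fin n, p ∉ Ω → S₀ p.1 p.2 = 0)
    (U_A : Matrix (Fin m) (Fin r_A) ℝ) (hUA : U_Aᵀ * U_A = 1)
    (hUArange : LinearMap.range (Matrix.toLin' A) = LinearMap.range (Matrix.toLin' U_A))
    (hcol : U_A * U_Aᵀ * L₀ = L₀)
    (htrans : ∀ Δ : Matrix (Fin m) (Fin n) ℝ,
        U_A * U_Aᵀ * Δ = Δ → (∀ p : Fin m × Fin n, p ∉ Ω → Δ p.1 p.2 = 0) → Δ = 0)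
    (Apinv : Matrix (Fin d) (Fin m) ℝ)
    (hp1 : A * Apinv * A = A) (hp2 : Apinv * A * Apinv = Apinv)
    (hp4 : (Apinv * A)ᵀ = Apinv * A)
    (U : Matrix (Fin d) (Fin r) ℝ) (V : Matrix (Fin n) (Fin r) ℝ)
    (σ : Fin r → ℝ) (hσ : ∀ i, 0 < σ i)
    (hU : Uᵀ * U = 1) (hV : Vᵀ * V = 1)
    (hSVD : Apinv * L₀ = U * Matrix.diagonal σ * Vᵀ)
    (F : Matrix (Fin m) (Fin n) ℝ)
    (ha : U * Vᵀ = lam • (Aᵀ * (Matrix.of (fun i j => Real.sign (S₀ i j)) + F)))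
    (hb : ∀ p : Fin m × Fin n, p ∈ Ω → F p.1 p.2 = 0)
    (hc : ∀ p : Fin m × Fin n, p ∉ Ω → |F p.1 p.2| < 1) :
    ∀ Z : Matrix (Fin d) (Fin n) ℝ, ∀ S : Matrix (Fin m) (Fin n) ℝ,
      X = A * Z + S → ¬(Z = Apinv * L₀ ∧ S = S₀) →
      nucNorm (Apinv * L₀) + lam * l1Norm S₀ < nucNorm Z + lam * l1Norm S := by
  intro Z S hfeas hne
  obtain ⟨B₁, hB₁⟩ := exists_eq_mul_of_range_le hUArange.le
  obtain ⟨B₂, hB₂⟩ := exists_eq_mul_of_range_le hUArange.ge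
  have hL₀ : L₀ = A * (B₂ * (U_Aᵀ * L₀)) := by
    rw [← Matrix.mul_assoc, ← hB₂, ← Matrix.mul_assoc, hcol]
  have hAZ₀ : A * (Apinv * L₀) = L₀ := by
    rw [hL₀, ← Matrix.mul_assoc, ← Matrix.mul_assoc, hp1]
  have hS : S = S₀ - A * (Z - Apinv * L₀) := by
    rw [eq_sub_of_add_eq' hfeas.symm, hX, Matrix.mul_sub, hAZ₀]
    abel
  rw [hS]
  by_cases hD : ∃ p ∉ Ω, (A * (Z - Apinv * L₀)) p.1 p.2 ≠ 0
  · have hnuc := nucNorm_svd_add_trace_le hU hV (fun i => (hσ i).le) Z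
    rw [← hSVD, ha, transpose_smul, Matrix.smul_mul, trace_smul, transpose_mul,
      transpose_transpose, Matrix.mul_assoc, smul_eq_mul] at hnuc
    have hl1 := mul_lt_mul_of_pos_left (l1Norm_sub_trace_lt hS₀supp hb hc hD) hlam
    linarith
  · push Not at hD
    have hUAA : U_A * U_Aᵀ * A = A := by
      rw [hB₁, ← Matrix.mul_assoc, Matrix.mul_assoc U_A, hUA, Matrix.mul_one]
    have hD₀ : A * (Z - Apinv * L₀) = 0 := htrans _ (by rw [← Matrix.mul_assoc, hUAA]) hD
    have hH : Z - Apinv * L₀ ≠ 0 := fun h =>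
      hne ⟨sub_eq_zero.1 h, by rw [hS, hD₀, sub_zero]⟩
    have hZ₀H : (Apinv * L₀)ᵀ * (Z - Apinv * L₀) = 0 := by
      rw [transpose_mul, Matrix.mul_assoc, pinv_transpose_mul_eq_zero hp2 hp4 hD₀,
        Matrix.mul_zero]
    have hlt := nucNorm_lt_nucNorm_add hZ₀H hH
    rw [add_sub_cancel] at hlt
    rw [hD₀, sub_zero]
    linarith

/-- Dual conditions for LRR.  Let `X = L₀ + S₀` with `S₀` supported on `Ω`, let `U_A` be an
orthonormal basis of the column space of `A`, suppose the column space of `L₀` is contained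
in that of `A` (`P_{U_A} L₀ = L₀`), and suppose no nonzero matrix in the range of `P_{U_A}`
is supported on `Ω`.  Let `A⁺` be the Moore–Penrose pseudoinverse of `A` and `U Σ Vᵀ` a
skinny SVD of `A⁺L₀`.  If there exists `F` with `U Vᵀ = λ Aᵀ(sign S₀ + F)`, `P_Ω F = 0`
and `‖P_{Ω^⊥} F‖_∞ < 1`, then `(A⁺L₀, S₀)` is the unique optimal solution of
`min ‖Z‖_* + λ‖S‖₁ s.t. X = AZ + S`. -/
theorem lrr_dual_conditions (m n d r_A r : ℕ) (lam : ℝ) (hlam : 0 < lam)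
    (X L₀ S₀ : Matrix (Fin m) (Fin n) ℝ) (A : Matrix (Fin m) (Fin d) ℝ)
    (Ω : Set (Fin m × Fin n))
    (hX : X = L₀ + S₀)
    (hS₀supp : ∀ p : Fin m × Fin n, p ∉ Ω → S₀ p.1 p.2 = 0)
    (U_A : Matrix (Fin m) (Fin r_A) ℝ) (hUA : U_Aᵀ * U_A = 1)
    (hUArange : LinearMap.range (Matrix.toLin' A) = LinearMap.range (Matrix.toLin' U_A))
    (hcol : U_A * U_Aᵀ * L₀ = L₀)
    (htrans : ∀ Δ : Matrix (Fin m) (Fin n) ℝ,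
        U_A * U_Aᵀ * Δ = Δ → (∀ p : Fin m × Fin n, p ∉ Ω → Δ p.1 p.2 = 0) → Δ = 0)
    (Apinv : Matrix (Fin d) (Fin m) ℝ)
    (hp1 : A * Apinv * A = A) (hp2 : Apinv * A * Apinv = Apinv)
    (hp3 : (A * Apinv)ᵀ = A * Apinv) (hp4 : (Apinv * A)ᵀ = Apinv * A)
    (U : Matrix (Fin d) (Fin r) ℝ) (V : Matrix (Fin n) (Fin r) ℝ)
    (σ : Fin r → ℝ) (hσ : ∀ i, 0 < σ i)
    (hU : Uᵀ * U = 1) (hV : Vᵀ * V = 1)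
    (hSVD : Apinv * L₀ = U * Matrix.diagonal σ * Vᵀ)
    (F : Matrix (Fin m) (Fin n) ℝ)
    (ha : U * Vᵀ = lam • (Aᵀ * (Matrix.of (fun i j => Real.sign (S₀ i j)) + F)))
    (hb : ∀ p : Fin m × Fin n, p ∈ Ω → F p.1 p.2 = 0)
    (hc : ∀ p : Fin m × Fin n, p ∉ Ω → |F p.1 p.2| < 1) :
    ∀ Z : Matrix (Fin d) (Fin n) ℝ, ∀ S : Matrix (Fin m) (Fin n) ℝ,
      X = A * Z + S → ¬(Z = Apinv * L₀ ∧ S = S₀) →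
      nucNorm (Apinv * L₀) + lam * l1Norm S₀ < nucNorm Z + lam * l1Norm S :=
  lrr_dual_conditions_general m n d r_A r lam hlam X L₀ S₀ A Ω hX hS₀supp U_A hUA hUArange hcol
    htrans Apinv hp1 hp2 hp4 U V σ hσ hU hV hSVD F ha hb hc
end

section
/- Let N_L ∈ ℝ^{m×n} lie in the range of P_{U_A} (i.e., P_{U_A}(N_L) = N_L), and suppose ‖P_{U_A}P_Ω‖ < 1, so that P = I + Σ_{i=1}^∞ (P_{U_A}P_ΩP_{U_A})^i is well-defined with ‖P‖ ≤ 1/(1−‖P_{U_A}P_Ω‖²). Then N_L = P ∘ P_{U_A} ∘ P_{Ω^⊥}(N_L), and consequently ‖N_L‖_F ≤ ‖P‖ · ‖P_{Ω^⊥}(N_L)‖_F. -/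
/-!
`P_U` and `P_Ω` are orthogonal projections, so `T = P_U P_Ω P_U = (P_U P_Ω)(P_U P_Ω)⋆` and the
C⋆-identity gives `‖T‖ = ‖P_U P_Ω‖² < 1`. Hence `P = ∑ Tⁱ` is the Neumann series inverting
`1 - T`, with `‖P‖ ≤ 1 / (1 - ‖T‖)`. For `N_L` in the range of `P_U`,
`(1 - T) N_L = P_U (1 - P_Ω) N_L = P_U P_{Ωᶜ} N_L`, and `P_U` is a contraction.
-/

open Matrix
open scoped Classical

variable {m n r : ℕ}

/-- The Hilbert space of `m × n` real matrices equipped with the Frobenius inner product,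
realized as a Euclidean space indexed by matrix positions. -/
abbrev MatHilb (m n : ℕ) := EuclideanSpace ℝ (Fin m × Fin n)

/-- Coordinate projection `P_Ω` onto the matrices supported on `Ω`. -/
noncomputable def projSupp (Ω : Set (Fin m × Fin n)) : MatHilb m n →L[ℝ] MatHilb m n :=
  LinearMap.toContinuousLinearMap
    { toFun := fun x => (WithLp.toLp 2 (fun p => if p ∈ Ω then x p else 0) : MatHilb m n)
      map_add' := by
        intro x y; ext p
        by_cases h : p ∈ Ω <;> simp [h, PiLp.add_apply]
      map_smul' := by
        intro c x; ext p
        by_cases h : p ∈ Ω <;> simp [h, PiLp.smul_apply] }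

/-- The projection `P_U : M ↦ U Uᵀ M` onto the set of matrices whose columns lie in the
column space of `U`. -/
noncomputable def projColSp (U : Matrix (Fin m) (Fin r) ℝ) :
    MatHilb m n →L[ℝ] MatHilb m n :=
  LinearMap.toContinuousLinearMap
    { toFun := fun x => (WithLp.toLp 2 (fun p : Fin m × Fin n => ∑ a, (U * Uᵀ) p.1 a * x (a, p.2)) : MatHilb m n)
      map_add' := by
        intro x y; ext p
        simp [PiLp.add_apply, mul_add, Finset.sum_add_distrib]
      map_smul' := by
        intro c x; ext p
        simp [PiLp.smul_apply, Finset.mul_sum]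
        exact Finset.sum_congr rfl fun a _ => by ring }

open scoped Kronecker

section CStarRing

variable {A : Type*} [NonUnitalNormedRing A] [StarRing A] [CStarRing A]

theorem IsStarProjection.norm_mul_mul_self {p q : A} (hp : IsStarProjection p)
    (hq : IsStarProjection q) : ‖p * q * p‖ = ‖p * q‖ ^ 2 := by
  have : p * q * p = p * q * star (p * q) := by
    rw [star_mul, hp.isSelfAdjoint.star_eq, hq.isSelfAdjoint.star_eq, ← mul_assoc,
      mul_assoc p q q, hq.isIdempotentElem.eq]
  rw [this, CStarRing.norm_self_mul_star, sq]

end CStarRing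

section NormedRing

variable {R : Type*} [NormedRing R] [HasSummableGeomSeries R]

theorem one_add_tsum_pow_succ_mul_one_sub {x : R} (hx : ‖x‖ < 1) :
    (1 + ∑' i : ℕ, x ^ (i + 1)) * (1 - x) = 1 := by
  rw [geom_series_succ x hx, add_sub_cancel, geom_series_mul_neg x hx]

theorem norm_one_add_tsum_pow_succ_le (h1 : ‖(1 : R)‖ ≤ 1) {x : R} (hx : ‖x‖ < 1) :
    ‖1 + ∑' i : ℕ, x ^ (i + 1)‖ ≤ 1 / (1 - ‖x‖) := by
  rw [geom_series_succ x hx, add_sub_cancel, one_div]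
  linarith [tsum_geometric_le_of_norm_lt_one x hx]

end NormedRing

namespace Matrix

variable {ι κ R : Type*} [Fintype ι] [Fintype κ] [CommSemiring R] [StarRing R]

theorem _root_.IsStarProjection.kronecker {A : Matrix ι ι R} {B : Matrix κ κ R}
    (hA : IsStarProjection A) (hB : IsStarProjection B) : IsStarProjection (A ⊗ₖ B) where
  isIdempotentElem := by
    rw [IsIdempotentElem, ← mul_kronecker_mul, hA.isIdempotentElem.eq, hB.isIdempotentElem.eq]
  isSelfAdjoint := by
    rw [IsSelfAdjoint, star_eq_conjTranspose, conjTranspose_kronecker,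
      ← star_eq_conjTranspose, ← star_eq_conjTranspose, hA.isSelfAdjoint.star_eq,
      hB.isSelfAdjoint.star_eq]

theorem isStarProjection_diagonal [DecidableEq ι] {d : ι → R}
    (hd : ∀ i, IsStarProjection (d i)) : IsStarProjection (diagonal d) where
  isIdempotentElem := by
    rw [IsIdempotentElem, diagonal_mul_diagonal]
    exact congrArg diagonal (funext fun i => (hd i).isIdempotentElem.eq)
  isSelfAdjoint := by
    rw [IsSelfAdjoint, star_eq_conjTranspose, diagonal_conjTranspose]
    exact congrArg diagonal (funext fun i => (hd i).isSelfAdjoint.star_eq)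

theorem isStarProjection_mul_transpose [DecidableEq ι] {U : Matrix κ ι ℝ} (hU : Uᵀ * U = 1) :
    IsStarProjection (U * Uᵀ) where
  isIdempotentElem := by
    rw [IsIdempotentElem, Matrix.mul_assoc, ← Matrix.mul_assoc Uᵀ, hU, Matrix.one_mul]
  isSelfAdjoint := by
    rw [IsSelfAdjoint, star_eq_conjTranspose, conjTranspose_eq_transpose_of_trivial,
      transpose_mul, transpose_transpose]

end Matrix

theorem projColSp_eq_toEuclideanCLM (U : Matrix (Fin m) (Fin r) ℝ) :
    projColSp (n := n) U =
      toEuclideanCLM (𝕜 := ℝ) ((U * Uᵀ) ⊗ₖ (1 : Matrix (Fin n) (Fin n) ℝ)) := by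
  ext x p
  simp [projColSp, mulVec, dotProduct, Fintype.sum_prod_type, kroneckerMap_apply, one_apply]

theorem projSupp_eq_toEuclideanCLM (Ω : Set (Fin m × Fin n)) :
    projSupp Ω = toEuclideanCLM (𝕜 := ℝ) (diagonal (Ω.indicator 1)) := by
  ext x p
  simp [projSupp, mulVec_diagonal, Set.indicator_apply]

theorem isStarProjection_projColSp {U : Matrix (Fin m) (Fin r) ℝ} (hU : Uᵀ * U = 1) :
    IsStarProjection (projColSp (n := n) U) := by
  rw [projColSp_eq_toEuclideanCLM]
  exact ((isStarProjection_mul_transpose hU).kronecker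
    (IsStarProjection.one (Matrix (Fin n) (Fin n) ℝ))).map _

theorem isStarProjection_projSupp (Ω : Set (Fin m × Fin n)) : IsStarProjection (projSupp Ω) := by
  rw [projSupp_eq_toEuclideanCLM]
  refine (isStarProjection_diagonal fun p => ?_).map _
  by_cases hp : p ∈ Ω <;> simp [hp]

theorem projSupp_compl (Ω : Set (Fin m × Fin n)) : projSupp Ωᶜ = 1 - projSupp Ω := by
  ext x p
  by_cases hp : p ∈ Ω <;> simp [projSupp, hp]

/-- If `N_L` lies in the range of `P_U` and `‖P_U P_Ω‖ < 1`, then with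
`P = I + ∑_{i≥1} (P_U P_Ω P_U)^i` (which satisfies `‖P‖ ≤ 1/(1 − ‖P_U P_Ω‖²)`) one has
`N_L = P (P_U (P_{Ω^⊥} N_L))`, and consequently `‖N_L‖_F ≤ ‖P‖ ‖P_{Ω^⊥} N_L‖_F`. -/
theorem mem_range_proj_controlled_by_complement (m n r : ℕ)
    (U : Matrix (Fin m) (Fin r) ℝ) (hU : Uᵀ * U = 1)
    (Ω : Set (Fin m × Fin n))
    (hnorm : ‖(projColSp U : MatHilb m n →L[ℝ] MatHilb m n) ∘L projSupp Ω‖ < 1)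
    (NL : MatHilb m n) (hNL : projColSp U NL = NL)
    (P : MatHilb m n →L[ℝ] MatHilb m n)
    (hP : P = 1 + ∑' i : ℕ,
        ((projColSp U : MatHilb m n →L[ℝ] MatHilb m n) ∘L projSupp Ω ∘L
          projColSp U) ^ (i + 1)) :
    ‖P‖ ≤ 1 / (1 - ‖(projColSp U : MatHilb m n →L[ℝ] MatHilb m n) ∘L projSupp Ω‖ ^ 2) ∧
    NL = P (projColSp U (projSupp Ωᶜ NL)) ∧
    ‖NL‖ ≤ ‖P‖ * ‖projSupp Ωᶜ NL‖ := by
  set T := (projColSp U : MatHilb m n →L[ℝ] MatHilb m n) ∘L projSupp Ω ∘L projColSp U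
  have hPU := isStarProjection_projColSp (n := n) hU
  have hT : ‖T‖ = ‖projColSp U ∘L projSupp Ω‖ ^ 2 := by
    have h := hPU.norm_mul_mul_self (isStarProjection_projSupp Ω)
    rw [mul_assoc] at h
    exact h
  have hT1 : ‖T‖ < 1 := by
    rw [hT]; exact pow_lt_one₀ (norm_nonneg _) hnorm two_ne_zero
  have hNL_eq : NL = P (projColSp U (projSupp Ωᶜ NL)) := by
    have hres : projColSp U (projSupp Ωᶜ NL) = (1 - T) NL := by simp [projSupp_compl, T, hNL]
    rw [hres, ← mul_apply_eq_comp, hP, one_add_tsum_pow_succ_mul_one_sub hT1,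
      one_apply_eq_self]
  refine ⟨?_, hNL_eq, ?_⟩
  · rw [hP, ← hT]
    exact norm_one_add_tsum_pow_succ_le ContinuousLinearMap.norm_id_le hT1
  · calc ‖NL‖ = ‖P (projColSp U (projSupp Ωᶜ NL))‖ := by rw [← hNL_eq]
      _ ≤ ‖P‖ * ‖projColSp U (projSupp Ωᶜ NL)‖ := P.le_opNorm _
      _ ≤ ‖P‖ * ‖projSupp Ωᶜ NL‖ := by
        gcongr
        exact (projColSp U).le_of_opNorm_le (hPU.norm_le _) _ |>.trans_eq (one_mul _)
end
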